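/- In a cOMARS design built from two parent DSDs (foldovers of n×m conference designs, m > 4) with n₀ center runs, the absolute correlation r_{ii,jk} between a quadratic-effect column and a two-factor interaction column not sharing a factor is proportional to the absolute correlation r_{ij,ik} between two interaction columns sharing a factor: r_{ii,jk} is nonzero if and only if r_{ij,ik} is nonzero, and in the nonzero case r_{ii,jk}/r_{ij,ik} = (n−2)·sqrt((4n+n₀)/((n₀+4)(n−1)(n−2))). -/

import Mathlib

open Finset Filter

/-- A conference design: mutually orthogonal columns, exactly one zero per column,
at most one zero per row, and ±1 entries elsewhere. -/
def IsConferenceDesign {n m : ℕ} (C : Matrix (Fin n) (Fin m) ℝ) : Prop :=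
  (∀ i j : Fin m, i ≠ j → ∑ r, C r i * C r j = 0) ∧
  (∀ j : Fin m, ∃! r : Fin n, C r j = 0) ∧
  (∀ r : Fin n, ∀ i j : Fin m, C r i = 0 → C r j = 0 → i = j) ∧
  (∀ r : Fin n, ∀ j : Fin m, C r j = 0 ∨ C r j = 1 ∨ C r j = -1)

/-- The foldover [C; -C] of a matrix C. -/
def foldover {n m : ℕ} (C : Matrix (Fin n) (Fin m) ℝ) :
    Matrix (Fin n ⊕ Fin n) (Fin m) ℝ :=
  fun r j => match r with
    | .inl a => C a j
    | .inr a => -C a j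

/-- A cOMARS design: two stacked parent DSDs (foldovers) plus n₀ center runs. -/
def cOMARS {n m : ℕ} (C₁ C₂ : Matrix (Fin n) (Fin m) ℝ) (n₀ : ℕ) :
    Matrix (((Fin n ⊕ Fin n) ⊕ (Fin n ⊕ Fin n)) ⊕ Fin n₀) (Fin m) ℝ :=
  fun r j => match r with
    | .inl (.inl a) => foldover C₁ a j
    | .inl (.inr a) => foldover C₂ a j
    | .inr _ => 0

/-- Pearson correlation of two columns of a model matrix. -/
noncomputable def pearson {ι : Type*} [Fintype ι] (u v : ι → ℝ) : ℝ :=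
  (∑ r, u r * v r - (∑ r, u r) * (∑ r, v r) / (Fintype.card ι)) /
    (Real.sqrt (∑ r, u r ^ 2 - (∑ r, u r) ^ 2 / (Fintype.card ι)) *
     Real.sqrt (∑ r, v r ^ 2 - (∑ r, v r) ^ 2 / (Fintype.card ι)))

/-!
Foldover makes every even function of a run sum to twice its sum over the parent design, and
center runs contribute nothing, so the column moments of a cOMARS design come from those of the
conference designs: interaction columns have zero sum and squared norm `4(n-2)`, and `xᵢ²` has
sum and squared norm `4(n-1)`. Both correlations then share the numerator
`∑ xᵢ² xⱼ xₖ = ∑ (xᵢxⱼ)(xᵢxₖ)` and differ only in normalisation, so their ratio is `√(B/A)` with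
`B = 4(n-2)` and `A = 4(n-1)(n₀+4)/(4n+n₀)` the centered squared norm of `xᵢ²`.
-/

namespace IsConferenceDesign

variable {n m : ℕ} {C : Matrix (Fin n) (Fin m) ℝ}

lemma sq_eq_one_sub_ite (hC : IsConferenceDesign C) {j : Fin m} {z : Fin n} (hz : C z j = 0)
    (a : Fin n) : C a j ^ 2 = 1 - if a = z then 1 else 0 := by
  split_ifs with ha
  · simp [ha, hz]
  · have hne : C a j ≠ 0 := fun h => ha ((hC.2.1 j).unique h hz)
    rcases hC.2.2.2 a j with h | h | h <;> simp_all

lemma sq_sq (hC : IsConferenceDesign C) (a : Fin n) (j : Fin m) :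
    (C a j ^ 2) ^ 2 = C a j ^ 2 := by
  obtain ⟨z, hz, -⟩ := hC.2.1 j
  rw [hC.sq_eq_one_sub_ite hz]
  split_ifs <;> norm_num

lemma sum_sq (hC : IsConferenceDesign C) (j : Fin m) : ∑ a, C a j ^ 2 = (n : ℝ) - 1 := by
  obtain ⟨z, hz, -⟩ := hC.2.1 j
  simp [hC.sq_eq_one_sub_ite hz, Finset.sum_sub_distrib]

-- The zero of column `i` sits in a row where column `j` is `±1`.
lemma sum_sq_mul_sq (hC : IsConferenceDesign C) {i j : Fin m} (hij : i ≠ j) :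
    ∑ a, C a i ^ 2 * C a j ^ 2 = (n : ℝ) - 2 := by
  obtain ⟨z, hz, -⟩ := hC.2.1 i
  have hzj : C z j ^ 2 = 1 := by
    obtain ⟨z', hz', -⟩ := hC.2.1 j
    have hne : z ≠ z' := fun h => hij (hC.2.2.1 z i j hz (h ▸ hz'))
    simpa [hne] using hC.sq_eq_one_sub_ite hz' z
  simp only [hC.sq_eq_one_sub_ite hz, sub_mul, one_mul, ite_mul, zero_mul,
    Finset.sum_sub_distrib, Finset.sum_ite_eq', Finset.mem_univ, if_true, hzj, hC.sum_sq j]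
  ring

lemma card_le (hC : IsConferenceDesign C) : m ≤ n := by
  choose z hz _ using hC.2.1
  exact Fintype.card_fin m ▸ Fintype.card_fin n ▸
    Fintype.card_le_of_injective z fun i j h => hC.2.2.1 _ i j (hz i) (h ▸ hz j)

end IsConferenceDesign

section Rows

variable {n m : ℕ} (C C₁ C₂ : Matrix (Fin n) (Fin m) ℝ) (n₀ : ℕ) (a : Fin n)

@[simp] lemma foldover_inl : foldover C (.inl a) = C a := rfl

@[simp] lemma foldover_inr : foldover C (.inr a) = -C a := rfl

@[simp] lemma cOMARS_inl_inl (r : Fin n ⊕ Fin n) :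
    cOMARS C₁ C₂ n₀ (.inl (.inl r)) = foldover C₁ r := rfl

@[simp] lemma cOMARS_inl_inr (r : Fin n ⊕ Fin n) :
    cOMARS C₁ C₂ n₀ (.inl (.inr r)) = foldover C₂ r := rfl

@[simp] lemma cOMARS_inr (r : Fin n₀) : cOMARS C₁ C₂ n₀ (.inr r) = 0 := rfl

end Rows

lemma sum_foldover_of_even {n m : ℕ} (C : Matrix (Fin n) (Fin m) ℝ) (g : (Fin m → ℝ) → ℝ)
    (hg : ∀ x, g (-x) = g x) : ∑ r, g (foldover C r) = 2 * ∑ a, g (C a) := by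
  simp [Fintype.sum_sum_type, hg, two_mul]

lemma sum_cOMARS_of_even {n m : ℕ} (C₁ C₂ : Matrix (Fin n) (Fin m) ℝ) (n₀ : ℕ)
    (g : (Fin m → ℝ) → ℝ) (hg₀ : g 0 = 0) (hg : ∀ x, g (-x) = g x) :
    ∑ r, g (cOMARS C₁ C₂ n₀ r) = 2 * (∑ a, g (C₁ a) + ∑ a, g (C₂ a)) := by
  rw [Fintype.sum_sum_type, Fintype.sum_sum_type]
  simp only [cOMARS_inl_inl, cOMARS_inl_inr, cOMARS_inr, hg₀, Finset.sum_const_zero, add_zero,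
    sum_foldover_of_even _ g hg, mul_add]

lemma card_cOMARS_rows (n n₀ : ℕ) :
    (Fintype.card (((Fin n ⊕ Fin n) ⊕ (Fin n ⊕ Fin n)) ⊕ Fin n₀) : ℝ) = 4 * n + n₀ := by
  simp only [Fintype.card_sum, Fintype.card_fin]
  push_cast
  ring

section cOMARSMoments

variable {n m : ℕ} {C₁ C₂ : Matrix (Fin n) (Fin m) ℝ} (n₀ : ℕ)
  (h₁ : IsConferenceDesign C₁) (h₂ : IsConferenceDesign C₂)
include h₁ h₂

lemma sum_cOMARS_sq (i : Fin m) : ∑ r, cOMARS C₁ C₂ n₀ r i ^ 2 = 4 * ((n : ℝ) - 1) := by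
  rw [sum_cOMARS_of_even C₁ C₂ n₀ (fun x => x i ^ 2) (by simp) (by simp), h₁.sum_sq, h₂.sum_sq]
  ring

lemma sum_cOMARS_sq_sq (i : Fin m) :
    ∑ r, (cOMARS C₁ C₂ n₀ r i ^ 2) ^ 2 = 4 * ((n : ℝ) - 1) := by
  rw [sum_cOMARS_of_even C₁ C₂ n₀ (fun x => (x i ^ 2) ^ 2) (by simp) (by simp)]
  simp only [h₁.sq_sq, h₂.sq_sq, h₁.sum_sq, h₂.sum_sq]
  ring

lemma sum_cOMARS_mul {i j : Fin m} (hij : i ≠ j) :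
    ∑ r, cOMARS C₁ C₂ n₀ r i * cOMARS C₁ C₂ n₀ r j = 0 := by
  rw [sum_cOMARS_of_even C₁ C₂ n₀ (fun x => x i * x j) (by simp) (by simp), h₁.1 i j hij,
    h₂.1 i j hij]
  ring

lemma sum_cOMARS_mul_sq {i j : Fin m} (hij : i ≠ j) :
    ∑ r, (cOMARS C₁ C₂ n₀ r i * cOMARS C₁ C₂ n₀ r j) ^ 2 = 4 * ((n : ℝ) - 2) := by
  rw [sum_cOMARS_of_even C₁ C₂ n₀ (fun x => (x i * x j) ^ 2) (by simp) (by simp)]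
  simp only [mul_pow, h₁.sum_sq_mul_sq hij, h₂.sum_sq_mul_sq hij]
  ring

end cOMARSMoments

section Pearson

variable {ι : Type*} [Fintype ι] {u v : ι → ℝ}

lemma pearson_of_sum_right_eq_zero (hv : ∑ r, v r = 0) :
    pearson u v = (∑ r, u r * v r) /
      (√(∑ r, u r ^ 2 - (∑ r, u r) ^ 2 / Fintype.card ι) * √(∑ r, v r ^ 2)) := by
  simp [pearson, hv]

lemma pearson_of_sum_eq_zero (hu : ∑ r, u r = 0) (hv : ∑ r, v r = 0) :
    pearson u v = (∑ r, u r * v r) / (√(∑ r, u r ^ 2) * √(∑ r, v r ^ 2)) := by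
  simp [pearson, hu, hv]

end Pearson

lemma abs_div_sqrt_mul_sqrt_ratio {S a b : ℝ} (ha : 0 < a) (hb : 0 < b) :
    (|S / (√a * √b)| ≠ 0 ↔ |S / (√b * √b)| ≠ 0) ∧
    (|S / (√a * √b)| ≠ 0 → |S / (√a * √b)| / |S / (√b * √b)| = √(b / a)) := by
  have hsa := Real.sqrt_pos.mpr ha
  have hsb := Real.sqrt_pos.mpr hb
  refine ⟨by simp [hsa.ne', hsb.ne'], fun hS => ?_⟩
  have hS : |S| ≠ 0 := by simpa [hsa.ne', hsb.ne'] using hS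
  rw [abs_div, abs_div, abs_of_pos (mul_pos hsa hsb), abs_of_pos (mul_pos hsb hsb),
    Real.sqrt_div' _ ha.le]
  field_simp

lemma sqrt_four_mul_sub_two_div_eq {n n₀ : ℝ} (hn : 2 < n) (hn₀ : 0 ≤ n₀) :
    √(4 * (n - 2) / (4 * (n - 1) - (4 * (n - 1)) ^ 2 / (4 * n + n₀))) =
      (n - 2) * √((4 * n + n₀) / ((n₀ + 4) * (n - 1) * (n - 2))) := by
  have hN : 4 * n + n₀ ≠ 0 := by positivity
  have : n - 1 ≠ 0 := by linarith
  have : n - 2 ≠ 0 := by linarith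
  have : n₀ + 4 ≠ 0 := by linarith
  have hA : 4 * (n - 1) - (4 * (n - 1)) ^ 2 / (4 * n + n₀) =
      4 * (n - 1) * (n₀ + 4) / (4 * n + n₀) := by
    field_simp
    ring
  rw [hA, show 4 * (n - 2) / (4 * (n - 1) * (n₀ + 4) / (4 * n + n₀)) =
      (n - 2) ^ 2 * ((4 * n + n₀) / ((n₀ + 4) * (n - 1) * (n - 2))) by field_simp,
    Real.sqrt_mul (sq_nonneg _), Real.sqrt_sq (by linarith)]

theorem stmt_16_general {n m n₀ : ℕ} (C₁ C₂ : Matrix (Fin n) (Fin m) ℝ)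
    (h₁ : IsConferenceDesign C₁) (h₂ : IsConferenceDesign C₂)
    (i j k : Fin m) (hij : i ≠ j) (hik : i ≠ k) (hjk : j ≠ k) :
    (|pearson (fun r => (cOMARS C₁ C₂ n₀ r i) ^ 2)
        (fun r => cOMARS C₁ C₂ n₀ r j * cOMARS C₁ C₂ n₀ r k)| ≠ 0 ↔
     |pearson (fun r => cOMARS C₁ C₂ n₀ r i * cOMARS C₁ C₂ n₀ r j)
        (fun r => cOMARS C₁ C₂ n₀ r i * cOMARS C₁ C₂ n₀ r k)| ≠ 0) ∧
    (|pearson (fun r => (cOMARS C₁ C₂ n₀ r i) ^ 2)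
        (fun r => cOMARS C₁ C₂ n₀ r j * cOMARS C₁ C₂ n₀ r k)| ≠ 0 →
      |pearson (fun r => (cOMARS C₁ C₂ n₀ r i) ^ 2)
          (fun r => cOMARS C₁ C₂ n₀ r j * cOMARS C₁ C₂ n₀ r k)| /
        |pearson (fun r => cOMARS C₁ C₂ n₀ r i * cOMARS C₁ C₂ n₀ r j)
          (fun r => cOMARS C₁ C₂ n₀ r i * cOMARS C₁ C₂ n₀ r k)|
        = ((n : ℝ) - 2) * Real.sqrt ((4 * (n : ℝ) + (n₀ : ℝ)) /
            (((n₀ : ℝ) + 4) * ((n : ℝ) - 1) * ((n : ℝ) - 2)))) := by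
  have hn : (2 : ℝ) < n := by
    have : 2 < m := by omega
    exact_mod_cast this.trans_le h₁.card_le
  -- Both correlations have the same numerator `∑ xᵢ² xⱼ xₖ`.
  have hnum : ∑ r, cOMARS C₁ C₂ n₀ r i * cOMARS C₁ C₂ n₀ r j *
      (cOMARS C₁ C₂ n₀ r i * cOMARS C₁ C₂ n₀ r k) =
      ∑ r, cOMARS C₁ C₂ n₀ r i ^ 2 * (cOMARS C₁ C₂ n₀ r j * cOMARS C₁ C₂ n₀ r k) :=
    Finset.sum_congr rfl fun _ _ => by ring
  rw [pearson_of_sum_right_eq_zero (sum_cOMARS_mul n₀ h₁ h₂ hjk),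
    pearson_of_sum_eq_zero (sum_cOMARS_mul n₀ h₁ h₂ hij) (sum_cOMARS_mul n₀ h₁ h₂ hik), hnum,
    sum_cOMARS_sq n₀ h₁ h₂, sum_cOMARS_sq_sq n₀ h₁ h₂, sum_cOMARS_mul_sq n₀ h₁ h₂ hjk,
    sum_cOMARS_mul_sq n₀ h₁ h₂ hij, sum_cOMARS_mul_sq n₀ h₁ h₂ hik, card_cOMARS_rows,
    ← sqrt_four_mul_sub_two_div_eq hn n₀.cast_nonneg]
  apply abs_div_sqrt_mul_sqrt_ratio
  · rw [sub_pos, div_lt_iff₀ (by positivity)]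
    nlinarith
  · linarith

theorem stmt_16 {n m n₀ : ℕ} (C₁ C₂ : Matrix (Fin n) (Fin m) ℝ)
    (h₁ : IsConferenceDesign C₁) (h₂ : IsConferenceDesign C₂) (hm : 4 < m)
    (i j k : Fin m) (hij : i ≠ j) (hik : i ≠ k) (hjk : j ≠ k) :
    (|pearson (fun r => (cOMARS C₁ C₂ n₀ r i) ^ 2)
        (fun r => cOMARS C₁ C₂ n₀ r j * cOMARS C₁ C₂ n₀ r k)| ≠ 0 ↔
     |pearson (fun r => cOMARS C₁ C₂ n₀ r i * cOMARS C₁ C₂ n₀ r j)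
        (fun r => cOMARS C₁ C₂ n₀ r i * cOMARS C₁ C₂ n₀ r k)| ≠ 0) ∧
    (|pearson (fun r => (cOMARS C₁ C₂ n₀ r i) ^ 2)
        (fun r => cOMARS C₁ C₂ n₀ r j * cOMARS C₁ C₂ n₀ r k)| ≠ 0 →
      |pearson (fun r => (cOMARS C₁ C₂ n₀ r i) ^ 2)
          (fun r => cOMARS C₁ C₂ n₀ r j * cOMARS C₁ C₂ n₀ r k)| /
        |pearson (fun r => cOMARS C₁ C₂ n₀ r i * cOMARS C₁ C₂ n₀ r j)
          (fun r => cOMARS C₁ C₂ n₀ r i * cOMARS C₁ C₂ n₀ r k)|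
        = ((n : ℝ) - 2) * Real.sqrt ((4 * (n : ℝ) + (n₀ : ℝ)) /
            (((n₀ : ℝ) + 4) * ((n : ℝ) - 1) * ((n : ℝ) - 2)))) :=
  stmt_16_general C₁ C₂ h₁ h₂ i j k hij hik hjk
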